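/- arXiv:2209.00453 — 4 statements merged into one kernel-verified Lean document; each statement's English description precedes it below -/
import Mathlib

section
/- Let K_{a,b} be the complete bipartite graph with partite sets A and B, where |A| = a ≥ 1 and |B| = b ≥ 1, and let τ : A ∪ B → {1, …, a+b} be any bijection. Then there exists a step i ∈ {1, …, a+b} at which all vertices of A are visible, or there exists a step i ∈ {1, …, a+b} at which all vertices of B are visible. -/
open Classical in
/-- The closed neighborhood of `v` in `G`, as a finset. -/
noncomputable def closedNbr {V : Type*} [Fintype V] (G : SimpleGraph V) (v : V) : Finset V :=
  Finset.univ.filter (fun u => u = v ∨ G.Adj v u)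

lemma closedNbr_nonempty {V : Type*} [Fintype V] (G : SimpleGraph V) (v : V) :
    (closedNbr G v).Nonempty :=
  ⟨v, by simp [closedNbr]⟩

/-- `j_v = max_{u ∈ N[v]} τ(u)`, the step after which `v` disappears. -/
noncomputable def lastStep {V : Type*} [Fintype V] {n : ℕ} (G : SimpleGraph V)
    (τ : V ≃ Fin n) (v : V) : Fin n :=
  (closedNbr G v).sup' (closedNbr_nonempty G v) (fun u => τ u)

/-- Vertex `v` is visible at step `i` if `τ(v) ≤ i ≤ j_v`. -/
def visibleAt {V : Type*} [Fintype V] {n : ℕ} (G : SimpleGraph V)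
    (τ : V ≃ Fin n) (v : V) (i : Fin n) : Prop :=
  τ v ≤ i ∧ i ≤ lastStep G τ v

/-- In any vertex order of the complete bipartite graph `K_{a,b}` (with `a, b ≥ 1`),
there is a step at which all vertices of `A` are visible, or a step at which all
vertices of `B` are visible. -/
theorem exists_step_all_visible (a b : ℕ) (ha : 1 ≤ a) (hb : 1 ≤ b)
    (τ : (Fin a ⊕ Fin b) ≃ Fin (a + b)) :
    (∃ i : Fin (a + b), ∀ x : Fin a,
        visibleAt (completeBipartiteGraph (Fin a) (Fin b)) τ (Sum.inl x) i) ∨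
    (∃ i : Fin (a + b), ∀ y : Fin b,
        visibleAt (completeBipartiteGraph (Fin a) (Fin b)) τ (Sum.inr y) i) := by
  classical
  set G := completeBipartiteGraph (Fin a) (Fin b) with hG
  have h0 : 0 < a + b := by omega
  set top : Fin (a + b) := ⟨a + b - 1, by omega⟩ with htopdef
  have htop : ∀ i : Fin (a + b), i ≤ top := by
    intro i
    have := i.isLt
    simp only [Fin.le_def, htopdef]
    omega
  have hτtop : τ (τ.symm top) = top := τ.apply_symm_apply top
  -- membership in closed neighborhoods
  have hmemA : ∀ (x : Fin a) (y : Fin b),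
      (Sum.inr y : Fin a ⊕ Fin b) ∈ closedNbr G (Sum.inl x) := by
    intro x y; simp [closedNbr, hG]
  have hmemB : ∀ (y : Fin b) (x : Fin a),
      (Sum.inl x : Fin a ⊕ Fin b) ∈ closedNbr G (Sum.inr y) := by
    intro y x; simp [closedNbr, hG]
  haveI : Nonempty (Fin a) := ⟨⟨0, ha⟩⟩
  haveI : Nonempty (Fin b) := ⟨⟨0, hb⟩⟩
  cases hw : τ.symm top with
  | inr y0 =>
      left
      refine ⟨(Finset.univ : Finset (Fin a)).sup' Finset.univ_nonempty
        (fun x => τ (Sum.inl x)), fun x => ?_⟩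
      constructor
      · exact Finset.le_sup' (fun x => τ (Sum.inl x)) (Finset.mem_univ x)
      · refine le_trans (htop _) ?_
        have : τ (Sum.inr y0) = top := by rw [← hw, hτtop]
        calc top = τ (Sum.inr y0) := this.symm
          _ ≤ lastStep G τ (Sum.inl x) := Finset.le_sup' _ (hmemA x y0)
  | inl x0 =>
      right
      refine ⟨(Finset.univ : Finset (Fin b)).sup' Finset.univ_nonempty
        (fun y => τ (Sum.inr y)), fun y => ?_⟩
      constructor
      · exact Finset.le_sup' (fun y => τ (Sum.inr y)) (Finset.mem_univ y)
      · refine le_trans (htop _) ?_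
        have : τ (Sum.inl x0) = top := by rw [← hw, hτtop]
        calc top = τ (Sum.inl x0) := this.symm
          _ ≤ lastStep G τ (Sum.inr y) := Finset.le_sup' _ (hmemB y x0)
end

section
/- Let K_{a,b} be the complete bipartite graph with partite sets A and B, where 3 ≤ b = |B| ≤ a = |A|, and let τ : A ∪ B → {1, …, a+b} be a bijection such that at no step i are at least three vertices of A and at least three vertices of B simultaneously visible. Then exactly one of the two partite sets has all of its vertices simultaneously visible at some step: either there is a step at which all vertices of A are visible, or there is a step at which all vertices of B are visible, but not both. -/
open Classical in
/-- In `K_{a,b}` with `3 ≤ b ≤ a`, given a vertex order such that at no step are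
three vertices of `A` and three vertices of `B` simultaneously visible, exactly one
of the two partite sets has all of its vertices simultaneously visible at some step. -/
theorem exactly_one_side_fixed (a b : ℕ) (hb : 3 ≤ b) (hba : b ≤ a)
    (τ : (Fin a ⊕ Fin b) ≃ Fin (a + b))
    (hK33 : ∀ i : Fin (a + b),
      ¬ (3 ≤ (Finset.univ.filter fun x : Fin a =>
              visibleAt (completeBipartiteGraph (Fin a) (Fin b)) τ (Sum.inl x) i).card ∧
         3 ≤ (Finset.univ.filter fun y : Fin b =>
              visibleAt (completeBipartiteGraph (Fin a) (Fin b)) τ (Sum.inr y) i).card)) :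
    ((∃ i : Fin (a + b), ∀ x : Fin a,
        visibleAt (completeBipartiteGraph (Fin a) (Fin b)) τ (Sum.inl x) i) ∨
     (∃ i : Fin (a + b), ∀ y : Fin b,
        visibleAt (completeBipartiteGraph (Fin a) (Fin b)) τ (Sum.inr y) i)) ∧
    ¬ ((∃ i : Fin (a + b), ∀ x : Fin a,
        visibleAt (completeBipartiteGraph (Fin a) (Fin b)) τ (Sum.inl x) i) ∧
       (∃ i : Fin (a + b), ∀ y : Fin b,
        visibleAt (completeBipartiteGraph (Fin a) (Fin b)) τ (Sum.inr y) i)) := by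
  classical
  have hn : 0 < a + b := by omega
  set G := completeBipartiteGraph (Fin a) (Fin b) with hG
  obtain ⟨t, ht⟩ : ∃ t : Fin (a + b), ∀ i, i ≤ t :=
    ⟨Finset.univ.max' ⟨⟨0, hn⟩, Finset.mem_univ _⟩,
      fun i => Finset.le_max' _ _ (Finset.mem_univ i)⟩
  have memAB : ∀ (x : Fin a) (y : Fin b), Sum.inr y ∈ closedNbr G (Sum.inl x) := by
    intro x y; simp [closedNbr, hG]
  have memBA : ∀ (y : Fin b) (x : Fin a), Sum.inl x ∈ closedNbr G (Sum.inr y) := by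
    intro y x; simp [closedNbr, hG]
  have nbrA : ∀ (x : Fin a) (u : Fin a ⊕ Fin b), u ∈ closedNbr G (Sum.inl x) →
      u = Sum.inl x ∨ ∃ y, u = Sum.inr y := by
    intro x u hu
    rcases u with x' | y
    · left
      simp [closedNbr, hG] at hu
      simp [hu]
    · right; exact ⟨y, rfl⟩
  have nbrB : ∀ (y : Fin b) (u : Fin a ⊕ Fin b), u ∈ closedNbr G (Sum.inr y) →
      u = Sum.inr y ∨ ∃ x, u = Sum.inl x := by
    intro y u hu
    rcases u with x | y'
    · right; exact ⟨x, rfl⟩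
    · left
      simp [closedNbr, hG] at hu
      simp [hu]
  rcases hw : τ.symm t with x₀ | y₀
  · -- the maximal step belongs to a vertex of A : B is fixed, A is not
    have hτ : τ (Sum.inl x₀) = t := by rw [← hw, Equiv.apply_symm_apply]
    have allB : ∀ y : Fin b, visibleAt G τ (Sum.inr y) t := by
      intro y
      refine ⟨ht _, ?_⟩
      calc t = τ (Sum.inl x₀) := hτ.symm
        _ ≤ lastStep G τ (Sum.inr y) := Finset.le_sup' _ (memBA y x₀)
    have noA : ¬ ∃ i : Fin (a + b), ∀ x : Fin a, visibleAt G τ (Sum.inl x) i := by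
      rintro ⟨i, hi⟩
      obtain ⟨x₁, hx₁⟩ : ∃ x₁ : Fin a, x₁ ≠ x₀ := by
        have h2 : 1 < Fintype.card (Fin a) := by simp; omega
        exact Fintype.exists_ne_of_one_lt_card h2 x₀
      have hit : i = t := le_antisymm (ht i) (hτ ▸ (hi x₀).1)
      have hlt : lastStep G τ (Sum.inl x₁) < t := by
        rw [lastStep, Finset.sup'_lt_iff]
        intro u hu
        have hne : τ u ≠ t := by
          intro h
          have hu0 : u = Sum.inl x₀ := by
            have h3 := congrArg τ.symm h
            rwa [Equiv.symm_apply_apply, hw] at h3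
          subst hu0
          rcases nbrA x₁ _ hu with h1 | ⟨y, h2⟩
          · exact hx₁ (Sum.inl_injective h1).symm
          · simp at h2
        exact lt_of_le_of_ne (ht _) hne
      have h4 := (hi x₁).2
      rw [hit] at h4
      exact absurd h4 (not_le.mpr hlt)
    exact ⟨Or.inr ⟨t, allB⟩, fun h => noA h.1⟩
  · -- the maximal step belongs to a vertex of B : A is fixed, B is not
    have hτ : τ (Sum.inr y₀) = t := by rw [← hw, Equiv.apply_symm_apply]
    have allA : ∀ x : Fin a, visibleAt G τ (Sum.inl x) t := by
      intro x
      refine ⟨ht _, ?_⟩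
      calc t = τ (Sum.inr y₀) := hτ.symm
        _ ≤ lastStep G τ (Sum.inl x) := Finset.le_sup' _ (memAB x y₀)
    have noB : ¬ ∃ i : Fin (a + b), ∀ y : Fin b, visibleAt G τ (Sum.inr y) i := by
      rintro ⟨i, hi⟩
      obtain ⟨y₁, hy₁⟩ : ∃ y₁ : Fin b, y₁ ≠ y₀ := by
        have h2 : 1 < Fintype.card (Fin b) := by simp; omega
        exact Fintype.exists_ne_of_one_lt_card h2 y₀
      have hit : i = t := le_antisymm (ht i) (hτ ▸ (hi y₀).1)
      have hlt : lastStep G τ (Sum.inr y₁) < t := by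
        rw [lastStep, Finset.sup'_lt_iff]
        intro u hu
        have hne : τ u ≠ t := by
          intro h
          have hu0 : u = Sum.inr y₀ := by
            have h3 := congrArg τ.symm h
            rwa [Equiv.symm_apply_apply, hw] at h3
          subst hu0
          rcases nbrB y₁ _ hu with h1 | ⟨x, h2⟩
          · exact hy₁ (Sum.inr_injective h1).symm
          · simp at h2
        exact lt_of_le_of_ne (ht _) hne
      have h4 := (hi y₁).2
      rw [hit] at h4
      exact absurd h4 (not_le.mpr hlt)
    exact ⟨Or.inl ⟨t, allA⟩, fun h => noB h.2⟩
end

section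
/- Let G = (V, E) be a finite simple graph with n = |V| ≥ 1 vertices and let τ : V → {1, …, n} be a bijection. Then the maximum over i ∈ {1, …, n} of the number of vertices visible at step i equals 1 plus the vertex separation number of τ, i.e., max_{i ∈ [n]} |{v ∈ V : v is visible at step i}| = 1 + max_{i ∈ [n]} |{v ∈ V : τ(v) ≤ i and v has a neighbor u with τ(u) > i}|. -/
open Classical in
/-- The maximum number of visible vertices over all steps equals one plus the
vertex separation number of the order `τ`. -/
theorem max_visible_eq_one_add_vertexSeparation {V : Type*} [Fintype V]
    (G : SimpleGraph V) {n : ℕ} (hn : 0 < n) (τ : V ≃ Fin n) :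
    (Finset.univ : Finset (Fin n)).sup
        (fun i => (Finset.univ.filter fun v : V => visibleAt G τ v i).card)
    = 1 + (Finset.univ : Finset (Fin n)).sup
        (fun i => (Finset.univ.filter fun v : V =>
            τ v ≤ i ∧ ∃ u : V, G.Adj v u ∧ i < τ u).card) := by
  classical
  have hvis : ∀ (i : Fin n) (v : V),
      visibleAt G τ v i ↔ τ v ≤ i ∧ ∃ u ∈ closedNbr G v, i ≤ τ u := by
    intro i v
    unfold visibleAt lastStep
    rw [Finset.le_sup'_iff]
  have hmem : ∀ v u : V, u ∈ closedNbr G v ↔ (u = v ∨ G.Adj v u) := by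
    intro v u; simp [closedNbr]
  -- key recurrence
  have key : ∀ (j : Fin n) (hj : (j : ℕ) + 1 < n),
      (Finset.univ.filter fun v : V => visibleAt G τ v ⟨(j : ℕ) + 1, hj⟩).card
      = 1 + (Finset.univ.filter fun v : V =>
          τ v ≤ j ∧ ∃ u : V, G.Adj v u ∧ j < τ u).card := by
    intro j hj
    set i : Fin n := ⟨(j : ℕ) + 1, hj⟩ with hi
    have hset : (Finset.univ.filter fun v : V => visibleAt G τ v i)
        = insert (τ.symm i) (Finset.univ.filter fun v : V =>
            τ v ≤ j ∧ ∃ u : V, G.Adj v u ∧ j < τ u) := by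
      ext v
      simp only [Finset.mem_insert, Finset.mem_filter, Finset.mem_univ, true_and, hvis]
      constructor
      · rintro ⟨hvi, u, hu, hiu⟩
        by_cases hv : τ v = i
        · left
          rw [← hv]; simp
        · right
          have hvj : τ v ≤ j := by
            have h1 : (τ v : ℕ) ≤ (i : ℕ) := hvi
            have h2 : (τ v : ℕ) ≠ (i : ℕ) := fun h => hv (Fin.ext h)
            have : (τ v : ℕ) ≤ (j : ℕ) := by
              simp only [hi] at h1 h2 ⊢; omega
            exact this
          rcases (hmem v u).mp hu with rfl | hadj
          · exfalso
            have h1 : (τ u : ℕ) ≤ (j : ℕ) := hvj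
            have h2 : (i : ℕ) ≤ (τ u : ℕ) := hiu
            simp only [hi] at h2; omega
          · refine ⟨hvj, u, hadj, ?_⟩
            have h2 : (i : ℕ) ≤ (τ u : ℕ) := hiu
            have : (j : ℕ) < (τ u : ℕ) := by simp only [hi] at h2; omega
            exact this
      · rintro (rfl | ⟨hvj, u, hadj, hju⟩)
        · refine ⟨by simp, τ.symm i, (hmem _ _).mpr (Or.inl rfl), by simp⟩
        · have hvi : τ v ≤ i := by
            have h1 : (τ v : ℕ) ≤ (j : ℕ) := hvj
            have : (τ v : ℕ) ≤ (i : ℕ) := by simp only [hi]; omega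
            exact this
          refine ⟨hvi, u, (hmem _ _).mpr (Or.inr hadj), ?_⟩
          have h1 : (j : ℕ) < (τ u : ℕ) := hju
          have : (i : ℕ) ≤ (τ u : ℕ) := by simp only [hi]; omega
          exact this
    rw [hset, Finset.card_insert_of_notMem, add_comm]
    simp only [Finset.mem_filter, Finset.mem_univ, true_and, not_and]
    intro h
    exfalso
    have h2 : ((τ (τ.symm i)) : ℕ) ≤ (j : ℕ) := h
    rw [Equiv.apply_symm_apply] at h2
    simp only [hi] at h2; omega
  -- step 0
  have f0 : (Finset.univ.filter fun v : V => visibleAt G τ v ⟨0, hn⟩).card = 1 := by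
    have : (Finset.univ.filter fun v : V => visibleAt G τ v ⟨0, hn⟩) = {τ.symm ⟨0, hn⟩} := by
      ext v
      simp only [Finset.mem_filter, Finset.mem_univ, true_and, Finset.mem_singleton, hvis]
      constructor
      · rintro ⟨hv0, -⟩
        have : (τ v : ℕ) = 0 := Nat.le_zero.mp hv0
        have : τ v = ⟨0, hn⟩ := Fin.ext this
        rw [← this]; simp
      · rintro rfl
        exact ⟨by simp, τ.symm ⟨0, hn⟩, (hmem _ _).mpr (Or.inl rfl), by simp [Fin.le_def]⟩
    rw [this, Finset.card_singleton]
  -- separator at last step is empty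
  have glast : ∀ (i : Fin n), (i : ℕ) = n - 1 →
      (Finset.univ.filter fun v : V =>
        τ v ≤ i ∧ ∃ u : V, G.Adj v u ∧ i < τ u).card = 0 := by
    intro i hi
    rw [Finset.card_eq_zero]
    ext v
    simp only [Finset.mem_filter, Finset.mem_univ, true_and, Finset.notMem_empty, iff_false,
      not_and]
    rintro - ⟨u, -, hu⟩
    have h1 : (i : ℕ) < (τ u : ℕ) := hu
    have h2 : (τ u : ℕ) < n := (τ u).isLt
    omega
  apply le_antisymm
  · apply Finset.sup_le
    intro i _
    rcases Nat.eq_zero_or_pos (i : ℕ) with h0 | hpos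
    · have : i = ⟨0, hn⟩ := Fin.ext h0
      rw [this, f0]
      exact Nat.le_add_right 1 _
    · obtain ⟨k, hk⟩ : ∃ k, (i : ℕ) = k + 1 := ⟨(i : ℕ) - 1, by omega⟩
      have hkn : k < n := by have := i.isLt; omega
      set j : Fin n := ⟨k, hkn⟩ with hjdef
      have hj : (j : ℕ) + 1 < n := by simp [hjdef, ← hk]
      have hieq : i = ⟨(j : ℕ) + 1, hj⟩ := Fin.ext (by simp [hjdef, hk])
      rw [hieq, key j hj]
      exact Nat.add_le_add_left (Finset.le_sup (f := fun i => (Finset.univ.filter fun v : V =>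
          τ v ≤ i ∧ ∃ u : V, G.Adj v u ∧ i < τ u).card) (Finset.mem_univ j)) 1
  · have hne : (Finset.univ : Finset (Fin n)).Nonempty := ⟨⟨0, hn⟩, Finset.mem_univ _⟩
    obtain ⟨j, -, hjs⟩ := Finset.exists_mem_eq_sup (Finset.univ : Finset (Fin n)) hne
      (fun i => (Finset.univ.filter fun v : V =>
          τ v ≤ i ∧ ∃ u : V, G.Adj v u ∧ i < τ u).card)
    rw [hjs]
    by_cases hj : (j : ℕ) + 1 < n
    · rw [← key j hj]
      exact Finset.le_sup (f := fun i => (Finset.univ.filter fun v : V =>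
          visibleAt G τ v i).card) (Finset.mem_univ _)
    · have hjl : (j : ℕ) = n - 1 := by have := j.isLt; omega
      rw [glast j hjl]
      calc 1 + 0 = (Finset.univ.filter fun v : V => visibleAt G τ v ⟨0, hn⟩).card := by
            rw [f0]
        _ ≤ _ := Finset.le_sup (f := fun i => (Finset.univ.filter fun v : V =>
              visibleAt G τ v i).card) (Finset.mem_univ _)
end

section
/- Let G = (V, E) be a finite simple graph with n = |V| ≥ 1 vertices that admits a path decomposition of width ω. Then there exists a bijection τ : V → {1, …, n} such that for every step i ∈ {1, …, n}, at most ω + 1 vertices are visible at step i. -/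
/-- A path decomposition of `G`: every edge is contained in some bag, and bags
containing any fixed vertex form an interval of indices. Its width is
`max_i |X i| - 1`. -/
def IsPathDecomposition {V : Type*} (G : SimpleGraph V) {h : ℕ} (X : Fin h → Finset V) : Prop :=
  (∀ u v : V, G.Adj u v → ∃ i : Fin h, u ∈ X i ∧ v ∈ X i) ∧
  (∀ i j k : Fin h, i ≤ j → j ≤ k → ∀ v : V, v ∈ X i → v ∈ X k → v ∈ X j)

open Classical in
/-- If `G` admits a path decomposition of width `ω` (all bags of size at most
`ω + 1`), then there is a vertex order `τ` such that at every step at most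
`ω + 1` vertices are visible. -/
theorem exists_order_of_pathDecomposition {V : Type*} [Fintype V]
    (G : SimpleGraph V) (hn : 0 < Fintype.card V)
    {h : ℕ} (X : Fin h → Finset V) (hpd : IsPathDecomposition G X) (ω : ℕ)
    (hw : ∀ i : Fin h, (X i).card ≤ ω + 1) :
    ∃ τ : V ≃ Fin (Fintype.card V), ∀ i : Fin (Fintype.card V),
      (Finset.univ.filter fun v : V => visibleAt G τ v i).card ≤ ω + 1 := by
  classical
  set n := Fintype.card V with hncard
  let bagsOf : V → Finset (Fin h) := fun v => Finset.univ.filter fun j => v ∈ X j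
  let κ : V → ℕ := fun v => if hb : (bagsOf v).Nonempty then ((bagsOf v).min' hb : ℕ) else h
  obtain ⟨e⟩ : Nonempty (V ≃ Fin n) := ⟨Fintype.equivFinOfCardEq rfl⟩
  let σ : Equiv.Perm (Fin n) := Tuple.sort (κ ∘ e.symm)
  let τ : V ≃ Fin n := e.trans σ.symm
  have hτsymm : ∀ j : Fin n, τ.symm j = e.symm (σ j) := fun j => rfl
  have hmono : ∀ {x y : Fin n}, x ≤ y → κ (τ.symm x) ≤ κ (τ.symm y) := by
    intro x y hxy
    have := Tuple.monotone_sort (κ ∘ e.symm) hxy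
    simpa [hτsymm] using this
  have hkey : ∀ v u : V, τ v ≤ τ u → κ v ≤ κ u := by
    intro v u hle
    have := hmono hle
    simpa using this
  refine ⟨τ, ?_⟩
  intro i
  set w := τ.symm i with hwdef
  have hτw : τ w = i := τ.apply_symm_apply i
  -- analyze visibility
  have hvis : ∀ v : V, visibleAt G τ v i →
      (v = w ∨ ∃ u k, G.Adj v u ∧ v ∈ X k ∧ u ∈ X k ∧ κ w ≤ κ u ∧ κ v ≤ κ w ∧
        (bagsOf v).Nonempty ∧ (bagsOf u).Nonempty ∧ (κ u : ℕ) ≤ (k : ℕ)) := by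
    intro v ⟨h1, h2⟩
    rw [lastStep, Finset.le_sup'_iff] at h2
    obtain ⟨u, hu, hiu⟩ := h2
    simp only [closedNbr, Finset.mem_filter, Finset.mem_univ, true_and] at hu
    rcases hu with huv | hadj
    · left
      have htv : τ v = i := le_antisymm h1 (huv ▸ hiu)
      calc v = τ.symm (τ v) := (τ.symm_apply_apply v).symm
        _ = τ.symm i := by rw [htv]
        _ = w := rfl
    · right
      obtain ⟨k, hvk, huk⟩ := hpd.1 v u hadj
      have hbv : (bagsOf v).Nonempty := ⟨k, by simp [bagsOf, hvk]⟩
      have hbu : (bagsOf u).Nonempty := ⟨k, by simp [bagsOf, huk]⟩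
      have hκu : (κ u : ℕ) ≤ (k : ℕ) := by
        simp only [κ, dif_pos hbu]
        exact Fin.le_def.mp (Finset.min'_le _ k (by simp [bagsOf, huk]))
      refine ⟨u, k, hadj, hvk, huk, ?_, ?_, hbv, hbu, hκu⟩
      · exact hkey w u (by rw [hτw]; exact hiu)
      · exact hkey v w (by rw [hτw]; exact h1)
  by_cases hbw : (bagsOf w).Nonempty
  · set m := (bagsOf w).min' hbw with hmdef
    have hmw : w ∈ X m := by
      have := (bagsOf w).min'_mem hbw
      simpa [bagsOf] using this
    have hκw : κ w = (m : ℕ) := by simp [κ, dif_pos hbw, hmdef]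
    have hsub : (Finset.univ.filter fun v : V => visibleAt G τ v i) ⊆ X m := by
      intro v hv
      simp only [Finset.mem_filter, Finset.mem_univ, true_and] at hv
      rcases hvis v hv with rfl | ⟨u, k, hadj, hvk, huk, hwu, hvw, hbv, hbu, hκu⟩
      · exact hmw
      · set a := (bagsOf v).min' hbv with hadef
        have hκv : κ v = (a : ℕ) := by simp [κ, dif_pos hbv, hadef]
        have hva : v ∈ X a := by
          have := (bagsOf v).min'_mem hbv
          simpa [bagsOf] using this
        have ham : a ≤ m := Fin.le_def.mpr (by rw [← hκv, ← hκw]; exact hvw)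
        have hmk : m ≤ k := Fin.le_def.mpr (by
          calc (m : ℕ) = κ w := hκw.symm
            _ ≤ κ u := hwu
            _ ≤ (k : ℕ) := hκu)
        exact hpd.2 a m k ham hmk v hva hvk
    calc (Finset.univ.filter fun v : V => visibleAt G τ v i).card
        ≤ (X m).card := Finset.card_le_card hsub
      _ ≤ ω + 1 := hw m
  · have hsub : (Finset.univ.filter fun v : V => visibleAt G τ v i) ⊆ {w} := by
      intro v hv
      simp only [Finset.mem_filter, Finset.mem_univ, true_and] at hv
      rcases hvis v hv with rfl | ⟨u, k, hadj, hvk, huk, hwu, hvw, hbv, hbu, hκu⟩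
      · simp
      · exfalso
        have hκwh : κ w = h := by simp [κ, dif_neg hbw]
        have : h ≤ (k : ℕ) := le_trans (hκwh ▸ hwu) hκu
        exact absurd k.isLt (not_lt.mpr this)
    calc (Finset.univ.filter fun v : V => visibleAt G τ v i).card
        ≤ ({w} : Finset V).card := Finset.card_le_card hsub
      _ ≤ ω + 1 := by simp
end
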